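/- For every n ≥ 2 there exists a set of 2^(n-2) points in general position in the plane containing no n points in convex position. -/

import Mathlib

/-- No three of the points of `S` are collinear. -/
def NoThreeCollinear (S : Set (ℝ × ℝ)) : Prop :=
  ∀ p ∈ S, ∀ q ∈ S, ∀ r ∈ S, p ≠ q → p ≠ r → q ≠ r →
    AffineIndependent ℝ ![p, q, r]

/-- A set of points is in convex position (convexly independent). -/
def ConvexIndep (S : Set (ℝ × ℝ)) : Prop :=
  ∀ p ∈ S, p ∉ convexHull ℝ (S \ {p})

/-!
The Erdős–Szekeres construction. Call `S` a `(k, l)`-set if its points have distinct abscissae, no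
three are collinear, every cup in `S` has at most `k` points and every cap at most `l`. Translate a
`(k + 1, l)`-set so far to the right and then so far up that the translate `R` lies above all lines
through two points of a `(k, l + 1)`-set `L`, and `L` below all lines through two points of `R`.
A cup meeting `L` then has at most its last point in `R`, and a cap meeting `R` at most its first
point in `L`, so `L ∪ R` is a `(k + 1, l + 1)`-set. Hence there are `(a + 1, b + 1)`-sets of size
`binom(a + b, a)`.

With `m = n - 2`, stack in the same way blocks `B₀, …, Bₘ`, where `Bᵢ` is an
`(i + 1, m - i + 1)`-set: this gives `∑ binom(m, i) = 2 ^ m` points. A set in convex position is a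
lower cup and an upper cap sharing its leftmost and rightmost points. If the rightmost point lies in
`Bⱼ`, the cup lies in the `(j + 1, _)`-set `B₀ ∪ … ∪ Bⱼ` and the cap has at most one point outside
`Bⱼ`, so the set has at most `(j + 1) + (m - j + 2) - 2 = m + 1 < n` points.
-/

open Finset Filter

namespace ErdosSzekeres

/-- Twice the signed area of the triangle `p q r`: positive iff `p q r` turn counterclockwise, so
for `p.1 < q.1 < r.1` positive iff `q` lies below the chord `p r`. -/
def orient (p q r : ℝ × ℝ) : ℝ :=
  (q.1 - p.1) * (r.2 - p.2) - (q.2 - p.2) * (r.1 - p.1)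

lemma orient_swap (p q r : ℝ × ℝ) : orient p r q = -orient p q r := by
  unfold orient; ring

@[simp]
lemma orient_self_left (p q : ℝ × ℝ) : orient p q p = 0 := by
  unfold orient; ring

@[simp]
lemma orient_self_right (p q : ℝ × ℝ) : orient p q q = 0 := by
  unfold orient; ring

lemma orient_rotate (p q r : ℝ × ℝ) : orient q r p = orient p q r := by
  unfold orient; ring

lemma orient_add_add_add (p q r v : ℝ × ℝ) : orient (p + v) (q + v) (r + v) = orient p q r := by
  simp only [orient, Prod.fst_add, Prod.snd_add]; ring

lemma orient_eq_zero_of_collinear {p q r : ℝ × ℝ} (h : Collinear ℝ {p, q, r}) :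
    orient p q r = 0 := by
  obtain ⟨v, hv⟩ := (collinear_iff_of_mem (Set.mem_insert p _)).1 h
  obtain ⟨s, rfl⟩ := hv q (by simp)
  obtain ⟨t, rfl⟩ := hv r (by simp)
  simp only [orient, vadd_eq_add, Prod.fst_add, Prod.snd_add, Prod.smul_fst, Prod.smul_snd,
    smul_eq_mul]
  ring

def IsCup (C : Finset (ℝ × ℝ)) : Prop :=
  ∀ p ∈ C, ∀ q ∈ C, ∀ r ∈ C, p.1 < q.1 → q.1 < r.1 → 0 < orient p q r

def IsCap (C : Finset (ℝ × ℝ)) : Prop :=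
  ∀ p ∈ C, ∀ q ∈ C, ∀ r ∈ C, p.1 < q.1 → q.1 < r.1 → orient p q r < 0

def IsGeneric (S : Finset (ℝ × ℝ)) : Prop :=
  Set.InjOn Prod.fst (S : Set (ℝ × ℝ)) ∧
    ∀ p ∈ S, ∀ q ∈ S, ∀ r ∈ S, p.1 < q.1 → q.1 < r.1 → orient p q r ≠ 0

def CupBounded (k : ℕ) (S : Finset (ℝ × ℝ)) : Prop :=
  ∀ C ⊆ S, IsCup C → C.card ≤ k

def CapBounded (k : ℕ) (S : Finset (ℝ × ℝ)) : Prop :=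
  ∀ C ⊆ S, IsCap C → C.card ≤ k

lemma IsCup.mono {C D : Finset (ℝ × ℝ)} (hD : IsCup D) (hCD : C ⊆ D) : IsCup C :=
  fun p hp q hq r hr => hD p (hCD hp) q (hCD hq) r (hCD hr)

lemma IsCap.mono {C D : Finset (ℝ × ℝ)} (hD : IsCap D) (hCD : C ⊆ D) : IsCap C :=
  fun p hp q hq r hr => hD p (hCD hp) q (hCD hq) r (hCD hr)

lemma IsGeneric.mono {S T : Finset (ℝ × ℝ)} (hT : IsGeneric T) (hST : S ⊆ T) : IsGeneric S :=
  ⟨hT.1.mono (coe_subset.2 hST), fun p hp q hq r hr => hT.2 p (hST hp) q (hST hq) r (hST hr)⟩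

lemma IsGeneric.orient_ne_zero {S : Finset (ℝ × ℝ)} (hS : IsGeneric S) {p q r : ℝ × ℝ}
    (hp : p ∈ S) (hq : q ∈ S) (hr : r ∈ S) (hpq : p ≠ q) (hpr : p ≠ r) (hqr : q ≠ r) :
    orient p q r ≠ 0 := by
  have hx : ∀ {u w}, u ∈ S → w ∈ S → u ≠ w → u.1 ≠ w.1 := fun hu hw huw e => huw (hS.1 hu hw e)
  wlog hp_min : p.1 < q.1 ∧ p.1 < r.1 generalizing p q r
  · rcases (hx hq hr hqr).lt_or_gt with hqr' | hrq'
    · have hqp : q.1 < p.1 :=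
        (hx hp hq hpq).lt_or_gt.resolve_left fun h => hp_min ⟨h, h.trans hqr'⟩
      have := this hq hp hr hpq.symm hqr hpr ⟨hqp, hqr'⟩
      rwa [← orient_rotate, orient_swap, neg_ne_zero] at this
    · have hrp : r.1 < p.1 :=
        (hx hp hr hpr).lt_or_gt.resolve_left fun h => hp_min ⟨h.trans hrq', h⟩
      have := this hr hp hq hpr.symm hqr.symm hpq ⟨hrp, hrq'⟩
      rwa [← orient_rotate] at this
  wlog hqr' : q.1 < r.1 generalizing q r
  · rw [← neg_ne_zero, ← orient_swap]
    exact this hr hq hpr hpq hqr.symm ⟨hp_min.2, hp_min.1⟩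
      ((hx hq hr hqr).lt_or_gt.resolve_left hqr')
  exact hS.2 p hp q hq r hr hp_min.1 hqr'

lemma IsGeneric.noThreeCollinear {S : Finset (ℝ × ℝ)} (hS : IsGeneric S) :
    NoThreeCollinear (S : Set (ℝ × ℝ)) := fun _ hp _ hq _ hr hpq hpr hqr =>
  affineIndependent_iff_not_collinear_set.2 fun h =>
    hS.orient_ne_zero hp hq hr hpq hpr hqr (orient_eq_zero_of_collinear h)

/-- `L` lies to the left of `R`, `R` lies above every line through two points of `L`, and `L` lies
below every line through two points of `R`. -/
def BelowLeft (L R : Finset (ℝ × ℝ)) : Prop :=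
  (∀ p ∈ L, ∀ r ∈ R, p.1 < r.1) ∧
    (∀ p ∈ L, ∀ q ∈ L, ∀ r ∈ R, p.1 < q.1 → 0 < orient p q r) ∧
    (∀ p ∈ L, ∀ q ∈ R, ∀ r ∈ R, q.1 < r.1 → orient p q r < 0)

section Translation

variable {S : Finset (ℝ × ℝ)} (v : ℝ × ℝ)

lemma isCup_image_add_iff {C : Finset (ℝ × ℝ)} : IsCup (C.image (· + v)) ↔ IsCup C := by
  simp only [IsCup, forall_mem_image, Prod.fst_add, add_lt_add_iff_right, orient_add_add_add]

lemma isCap_image_add_iff {C : Finset (ℝ × ℝ)} : IsCap (C.image (· + v)) ↔ IsCap C := by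
  simp only [IsCap, forall_mem_image, Prod.fst_add, add_lt_add_iff_right, orient_add_add_add]

lemma IsGeneric.image_add (h : IsGeneric S) : IsGeneric (S.image (· + v)) := by
  refine ⟨?_, by
    simpa only [forall_mem_image, Prod.fst_add, add_lt_add_iff_right, orient_add_add_add] using h.2⟩
  rw [coe_image]
  rintro _ ⟨p, hp, rfl⟩ _ ⟨q, hq, rfl⟩ hpq
  simp only [Prod.fst_add, add_left_inj] at hpq
  rw [h.1 hp hq hpq]

lemma CupBounded.image_add {k : ℕ} (h : CupBounded k S) : CupBounded k (S.image (· + v)) := by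
  intro C hC hcup
  obtain ⟨C, hCS, rfl⟩ := subset_image_iff.1 hC
  rw [card_image_of_injective _ (add_left_injective v)]
  exact h C hCS ((isCup_image_add_iff v).1 hcup)

lemma CapBounded.image_add {k : ℕ} (h : CapBounded k S) : CapBounded k (S.image (· + v)) := by
  intro C hC hcap
  obtain ⟨C, hCS, rfl⟩ := subset_image_iff.1 hC
  rw [card_image_of_injective _ (add_left_injective v)]
  exact h C hCS ((isCap_image_add_iff v).1 hcap)

end Translation

lemma eventually_pos_add_mul {c d : ℝ} (hd : 0 < d) : ∀ᶠ y in atTop, 0 < c + d * y := by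
  filter_upwards [eventually_gt_atTop (-c / d)] with y hy
  rw [div_lt_iff₀ hd] at hy
  linarith

lemma exists_belowLeft_image_add (L R : Finset (ℝ × ℝ)) :
    ∃ v : ℝ × ℝ, BelowLeft L (R.image (· + v)) := by
  have hx : ∀ᶠ x in atTop, ∀ p ∈ L, ∀ r ∈ R, p.1 < r.1 + x := by
    simp only [eventually_all_finset]
    intro p _ r _
    filter_upwards [eventually_gt_atTop (p.1 - r.1)] with x hx
    linarith
  obtain ⟨x, hx⟩ := hx.exists
  have hy : ∀ᶠ y in atTop,
      (∀ p ∈ L, ∀ q ∈ L, ∀ r ∈ R, p.1 < q.1 → 0 < orient p q (r + (x, y))) ∧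
      (∀ p ∈ L, ∀ q ∈ R, ∀ r ∈ R, q.1 < r.1 → orient p (q + (x, y)) (r + (x, y)) < 0) := by
    simp only [eventually_and, eventually_all_finset, eventually_imp_distrib_left]
    constructor
    · intro p _ q _ r _ hpq
      filter_upwards [eventually_pos_add_mul (c := orient p q (r + (x, 0))) (sub_pos.2 hpq)]
        with y hy
      have : orient p q (r + (x, y)) = orient p q (r + (x, 0)) + (q.1 - p.1) * y := by
        simp only [orient, Prod.fst_add, Prod.snd_add]; ring
      linarith
    · intro p _ q _ r _ hqr
      filter_upwards [eventually_pos_add_mul (c := -orient p (q + (x, 0)) (r + (x, 0)))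
        (sub_pos.2 hqr)] with y hy
      have : orient p (q + (x, y)) (r + (x, y)) =
          orient p (q + (x, 0)) (r + (x, 0)) - (r.1 - q.1) * y := by
        simp only [orient, Prod.fst_add, Prod.snd_add]; ring
      linarith
  obtain ⟨y, hcup, hcap⟩ := hy.exists
  refine ⟨(x, y), ?_, ?_, ?_⟩ <;>
    simp only [forall_mem_image, Prod.fst_add, add_lt_add_iff_right]
  exacts [hx, hcup, hcap]

lemma card_le_one_of_injOn_fst {s : Finset (ℝ × ℝ)} (hs : Set.InjOn Prod.fst (s : Set (ℝ × ℝ)))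
    (h : ∀ p ∈ s, ∀ q ∈ s, ¬p.1 < q.1) : s.card ≤ 1 :=
  card_le_one.2 fun p hp q hq =>
    hs hp hq (le_antisymm (not_lt.1 (h q hq p hp)) (not_lt.1 (h p hp q hq)))

lemma card_le_card_inter_add_card_inter {α : Type*} [DecidableEq α] {C L R : Finset α}
    (hC : C ⊆ L ∪ R) : C.card ≤ (C ∩ L).card + (C ∩ R).card := by
  calc C.card = ((C ∩ L) ∪ (C ∩ R)).card := by rw [← inter_union_distrib_left, inter_eq_left.2 hC]
    _ ≤ (C ∩ L).card + (C ∩ R).card := card_union_le _ _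

namespace BelowLeft

variable {L R : Finset (ℝ × ℝ)}

lemma disjoint (h : BelowLeft L R) : Disjoint L R :=
  disjoint_left.2 fun p hpL hpR => lt_irrefl _ (h.1 p hpL p hpR)

lemma isGeneric_union (h : BelowLeft L R) (hL : IsGeneric L) (hR : IsGeneric R) :
    IsGeneric (L ∪ R) := by
  refine ⟨?_, fun p hp q hq r hr hpq hqr => ?_⟩
  · rw [coe_union, Set.injOn_union (disjoint_coe.2 h.disjoint)]
    exact ⟨hL.1, hR.1, fun p hp r hr => (h.1 p hp r hr).ne⟩
  rcases mem_union.1 hp with hp | hp <;> rcases mem_union.1 hq with hq | hq <;>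
    rcases mem_union.1 hr with hr | hr
  · exact hL.2 p hp q hq r hr hpq hqr
  · exact (h.2.1 p hp q hq r hr hpq).ne'
  · exact absurd hqr (h.1 r hr q hq).asymm
  · exact (h.2.2 p hp q hq r hr hqr).ne
  all_goals first
    | exact absurd hpq (h.1 q hq p hp).asymm
    | exact absurd hqr (h.1 r hr q hq).asymm
    | exact hR.2 p hp q hq r hr hpq hqr

/-- Two points of `R` after a point of `L` form a cap. -/
lemma card_le_of_isCup (h : BelowLeft L R) (hR : Set.InjOn Prod.fst (R : Set (ℝ × ℝ)))
    {C : Finset (ℝ × ℝ)} (hC : IsCup C) (hCLR : C ⊆ L ∪ R) (hCL : (C ∩ L).Nonempty) :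
    C.card ≤ (C ∩ L).card + 1 := by
  obtain ⟨p, hp⟩ := hCL
  have hCR : (C ∩ R).card ≤ 1 := by
    refine card_le_one_of_injOn_fst (hR.mono (coe_subset.2 inter_subset_right))
      fun q hq r hr hqr => ?_
    rw [mem_inter] at hp hq hr
    exact (h.2.2 p hp.2 q hq.2 r hr.2 hqr).not_gt
      (hC p hp.1 q hq.1 r hr.1 (h.1 p hp.2 q hq.2) hqr)
  have := card_le_card_inter_add_card_inter hCLR
  omega

/-- Two points of `L` before a point of `R` form a cup. -/
lemma card_le_of_isCap (h : BelowLeft L R) (hL : Set.InjOn Prod.fst (L : Set (ℝ × ℝ)))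
    {C : Finset (ℝ × ℝ)} (hC : IsCap C) (hCLR : C ⊆ L ∪ R) (hCR : (C ∩ R).Nonempty) :
    C.card ≤ (C ∩ R).card + 1 := by
  obtain ⟨r, hr⟩ := hCR
  have hCL : (C ∩ L).card ≤ 1 := by
    refine card_le_one_of_injOn_fst (hL.mono (coe_subset.2 inter_subset_right))
      fun p hp q hq hpq => ?_
    rw [mem_inter] at hp hq hr
    exact (h.2.1 p hp.2 q hq.2 r hr.2 hpq).not_gt
      (hC p hp.1 q hq.1 r hr.1 hpq (h.1 q hq.2 r hr.2))
  have := card_le_card_inter_add_card_inter hCLR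
  omega

lemma cupBounded_union {k : ℕ} (h : BelowLeft L R) (hR : Set.InjOn Prod.fst (R : Set (ℝ × ℝ)))
    (hLk : CupBounded k L) (hRk : CupBounded (k + 1) R) : CupBounded (k + 1) (L ∪ R) := by
  intro C hCLR hC
  by_cases hCL : Disjoint C L
  · exact hRk C (hCL.left_le_of_le_sup_left hCLR) hC
  · have := h.card_le_of_isCup hR hC hCLR (not_disjoint_iff_nonempty_inter.1 hCL)
    have := hLk _ inter_subset_right (hC.mono inter_subset_left)
    omega

lemma capBounded_union {k : ℕ} (h : BelowLeft L R) (hL : Set.InjOn Prod.fst (L : Set (ℝ × ℝ)))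
    (hLk : CapBounded (k + 1) L) (hRk : CapBounded k R) : CapBounded (k + 1) (L ∪ R) := by
  intro C hCLR hC
  by_cases hCR : Disjoint C R
  · exact hLk C (hCR.left_le_of_le_sup_right hCLR) hC
  · have := h.card_le_of_isCap hL hC hCLR (not_disjoint_iff_nonempty_inter.1 hCR)
    have := hRk _ inter_subset_right (hC.mono inter_subset_left)
    omega

end BelowLeft

structure CupCapBounded (k l : ℕ) (S : Finset (ℝ × ℝ)) : Prop where
  isGeneric : IsGeneric S
  cupBounded : CupBounded k S
  capBounded : CapBounded l S

lemma cupCapBounded_singleton (x : ℝ × ℝ) (k l : ℕ) : CupCapBounded (k + 1) (l + 1) {x} := by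
  refine ⟨⟨by simp, ?_⟩, ?_, ?_⟩
  · simp only [mem_singleton]
    rintro p rfl q rfl r - hpq -
    exact absurd hpq (lt_irrefl _)
  all_goals exact fun C hC _ => (card_le_card hC).trans (by simp)

lemma BelowLeft.cupCapBounded_union {L R : Finset (ℝ × ℝ)} {k l : ℕ} (h : BelowLeft L R)
    (hL : CupCapBounded k (l + 1) L) (hR : CupCapBounded (k + 1) l R) :
    CupCapBounded (k + 1) (l + 1) (L ∪ R) :=
  ⟨h.isGeneric_union hL.isGeneric hR.isGeneric,
    h.cupBounded_union hR.isGeneric.1 hL.cupBounded hR.cupBounded,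
    h.capBounded_union hL.isGeneric.1 hL.capBounded hR.capBounded⟩

lemma exists_belowLeft_cupCapBounded (L : Finset (ℝ × ℝ)) {S : Finset (ℝ × ℝ)} {k l : ℕ}
    (hS : CupCapBounded k l S) :
    ∃ R, BelowLeft L R ∧ CupCapBounded k l R ∧ R.card = S.card := by
  obtain ⟨v, hv⟩ := exists_belowLeft_image_add L S
  exact ⟨_, hv, ⟨hS.isGeneric.image_add v, hS.cupBounded.image_add v,
    hS.capBounded.image_add v⟩, card_image_of_injective _ (add_left_injective v)⟩

theorem exists_cupCapBounded_card_eq_choose (a b : ℕ) :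
    ∃ S, CupCapBounded (a + 1) (b + 1) S ∧ S.card = (a + b).choose a := by
  induction a generalizing b with
  | zero => exact ⟨{0}, cupCapBounded_singleton 0 0 b, by simp⟩
  | succ a iha =>
    induction b with
    | zero => exact ⟨{0}, cupCapBounded_singleton 0 (a + 1) 0, by simp⟩
    | succ b ihb =>
      obtain ⟨L, hL, hLcard⟩ := iha (b + 1)
      obtain ⟨R, hR, hRcard⟩ := ihb
      obtain ⟨R', hLR', hR', hR'card⟩ := exists_belowLeft_cupCapBounded L hR
      refine ⟨L ∪ R', hLR'.cupCapBounded_union hL hR', ?_⟩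
      rw [card_union_of_disjoint hLR'.disjoint, hLcard, hR'card, hRcard,
        show a + 1 + (b + 1) = a + b + 1 + 1 by ring, Nat.choose_succ_succ,
        show a + (b + 1) = a + b + 1 by ring, show a + 1 + b = a + b + 1 by ring]

section ConvexPosition

lemma exists_mem_segment_fst_eq {p r : ℝ × ℝ} (x : ℝ) (hpx : p.1 ≤ x) (hxr : x ≤ r.1)
    (hpr : p.1 < r.1) :
    ∃ u ∈ segment ℝ p r, u.1 = x ∧ ∀ y, (r.1 - p.1) * (y - u.2) = orient p r (x, y) := by
  set t := (x - p.1) / (r.1 - p.1)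
  have hd : r.1 - p.1 ≠ 0 := by linarith
  refine ⟨AffineMap.lineMap p r t, ?_, ?_, fun y => ?_⟩
  · rw [segment_eq_image_lineMap]
    exact ⟨t, ⟨div_nonneg (by linarith) (by linarith), div_le_one_of_le₀ (by linarith)
      (by linarith)⟩, rfl⟩
  · simp only [AffineMap.lineMap_apply, vsub_eq_sub, vadd_eq_add, Prod.fst_add, Prod.smul_fst,
      Prod.fst_sub, smul_eq_mul, t]
    field_simp; ring
  · simp only [AffineMap.lineMap_apply, vsub_eq_sub, vadd_eq_add, Prod.snd_add, Prod.smul_snd,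
      Prod.snd_sub, smul_eq_mul, orient, t]
    field_simp; ring

lemma mem_segment_of_fst_eq {u v q : ℝ × ℝ} (hu : u.1 = q.1) (hv : v.1 = q.1)
    (huq : u.2 ≤ q.2) (hqv : q.2 ≤ v.2) : q ∈ segment ℝ u v := by
  rw [← Prod.mk.eta (p := u), ← Prod.mk.eta (p := v), ← Prod.mk.eta (p := q), hu, hv,
    ← Prod.image_mk_segment_right, segment_eq_uIcc]
  exact ⟨q.2, Set.mem_uIcc.2 (Or.inl ⟨huq, hqv⟩), rfl⟩

/-- `q` lies on the vertical segment between the points of the chords `p r` and `a b` above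
`q.1`. -/
lemma mem_convexHull_of_between_chords {s : Set (ℝ × ℝ)} {p r a b q : ℝ × ℝ}
    (hp : p ∈ s) (hr : r ∈ s) (ha : a ∈ s) (hb : b ∈ s)
    (hpq : p.1 ≤ q.1) (hqr : q.1 ≤ r.1) (hpr : p.1 < r.1)
    (haq : a.1 ≤ q.1) (hqb : q.1 ≤ b.1) (hab : a.1 < b.1)
    (h_above : 0 ≤ orient p r q) (h_below : orient a b q ≤ 0) : q ∈ convexHull ℝ s := by
  have hconv := convex_convexHull ℝ s
  have hsub := subset_convexHull ℝ s
  obtain ⟨u, hu, hu1, hu2⟩ := exists_mem_segment_fst_eq q.1 hpq hqr hpr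
  obtain ⟨v, hv, hv1, hv2⟩ := exists_mem_segment_fst_eq q.1 haq hqb hab
  have huq : u.2 ≤ q.2 := by
    have := hu2 q.2
    nlinarith
  have hqv : q.2 ≤ v.2 := by
    have := hv2 q.2
    nlinarith
  exact hconv.segment_subset (hconv.segment_subset (hsub hp) (hsub hr) hu)
    (hconv.segment_subset (hsub ha) (hsub hb) hv) (mem_segment_of_fst_eq hu1 hv1 huq hqv)


variable {T : Finset (ℝ × ℝ)}

lemma _root_.ConvexIndep.not_between_chords (hT : ConvexIndep (T : Set (ℝ × ℝ)))
    {p r a b q : ℝ × ℝ} (hp : p ∈ T) (hr : r ∈ T) (ha : a ∈ T) (hb : b ∈ T) (hq : q ∈ T)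
    (hpq : p.1 < q.1) (hqr : q.1 < r.1) (haq : a.1 < q.1) (hqb : q.1 < b.1)
    (h_above : 0 ≤ orient p r q) (h_below : orient a b q ≤ 0) : False := by
  have hmem : ∀ {u}, u ∈ T → u.1 ≠ q.1 → u ∈ (T : Set (ℝ × ℝ)) \ {q} :=
    fun hu hne => ⟨hu, fun h => hne (congrArg Prod.fst h)⟩
  exact hT q hq (mem_convexHull_of_between_chords (hmem hp hpq.ne) (hmem hr hqr.ne')
    (hmem ha haq.ne) (hmem hb hqb.ne') hpq.le hqr.le (hpq.trans hqr) haq.le hqb.le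
    (haq.trans hqb) h_above h_below)

/-- `C` and `D` are the points of `T` weakly below and weakly above the line `a b`; by genericity
they share only `a` and `b`. -/
lemma _root_.ConvexIndep.exists_isCup_isCap (hT : ConvexIndep (T : Set (ℝ × ℝ)))
    (hgen : IsGeneric T) {a b : ℝ × ℝ} (ha : a ∈ T) (hb : b ∈ T) (hab : a.1 < b.1)
    (ha_min : ∀ p ∈ T, a.1 ≤ p.1) (hb_max : ∀ p ∈ T, p.1 ≤ b.1) :
    ∃ C ⊆ T, ∃ D ⊆ T, IsCup C ∧ IsCap D ∧ b ∈ D ∧ T.card + 2 = C.card + D.card := by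
  set C := T.filter fun p => orient a b p ≤ 0
  set D := T.filter fun p => 0 ≤ orient a b p
  have hC : IsCup C := by
    intro p hp q hq r hr hpq hqr
    rw [mem_filter] at hp hq hr
    by_contra! h
    exact hT.not_between_chords hp.1 hr.1 ha hb hq.1 hpq hqr
      ((ha_min p hp.1).trans_lt hpq) (hqr.trans_le (hb_max r hr.1))
      (by rw [orient_swap]; linarith) hq.2
  have hD : IsCap D := by
    intro p hp q hq r hr hpq hqr
    rw [mem_filter] at hp hq hr
    by_contra! h
    exact hT.not_between_chords ha hb hp.1 hr.1 hq.1
      ((ha_min p hp.1).trans_lt hpq) (hqr.trans_le (hb_max r hr.1)) hpq hqr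
      hq.2 (by rw [orient_swap]; linarith)
  have hCD : C ∪ D = T := by
    ext p
    simp only [C, D, mem_union, mem_filter]
    constructor
    · rintro (h | h) <;> exact h.1
    · exact fun hp => (le_total (orient a b p) 0).imp (⟨hp, ·⟩) (⟨hp, ·⟩)
  have hCD' : C ∩ D = {a, b} := by
    ext p
    simp only [C, D, mem_inter, mem_filter, mem_insert, mem_singleton]
    constructor
    · rintro ⟨⟨hp, h₁⟩, -, h₂⟩
      by_contra! hne
      have hx : ∀ {u}, u ∈ T → u ≠ p → u.1 ≠ p.1 := fun hu hne e => hne (hgen.1 hu hp e)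
      refine hgen.2 a ha p hp b hb ((ha_min p hp).lt_of_ne (hx ha hne.1.symm))
        ((hb_max p hp).lt_of_ne (hx hb hne.2.symm).symm) ?_
      rw [orient_swap]
      linarith
    · rintro (rfl | rfl) <;> simp [*]
  refine ⟨C, filter_subset _ _, D, filter_subset _ _, hC, hD, ?_, ?_⟩
  · simp [D, hb]
  · rw [← card_union_add_card_inter, hCD, hCD', card_pair (ne_of_apply_ne Prod.fst hab.ne)]

end ConvexPosition

/-- If `T` reaches into `B`, its upper chain meets `F` in at most one point and its lower chain is a
cup of `F ∪ B`. -/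
lemma BelowLeft.card_le_of_convexIndep {F B T : Finset (ℝ × ℝ)} {k l : ℕ} (h : BelowLeft F B)
    (hgen : IsGeneric (F ∪ B)) (hcup : CupBounded (k + 1) (F ∪ B)) (hcap : CapBounded l B)
    (hF : ∀ T ⊆ F, ConvexIndep (T : Set (ℝ × ℝ)) → T.card ≤ k + l)
    (hTFB : T ⊆ F ∪ B) (hT : ConvexIndep (T : Set (ℝ × ℝ))) : T.card ≤ k + l := by
  by_cases hTF : T ⊆ F
  · exact hF T hTF hT
  obtain ⟨b₀, hb₀T, hb₀F⟩ := not_subset.1 hTF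
  obtain ⟨b, hbT, hb_max⟩ := T.exists_max_image Prod.fst ⟨b₀, hb₀T⟩
  obtain ⟨a, haT, ha_min⟩ := T.exists_min_image Prod.fst ⟨b₀, hb₀T⟩
  have hbB : b ∈ B := by
    refine (mem_union.1 (hTFB hbT)).resolve_left fun hbF => ?_
    have hb₀B := (mem_union.1 (hTFB hb₀T)).resolve_left hb₀F
    exact (h.1 b hbF b₀ hb₀B).not_ge (hb_max b₀ hb₀T)
  rcases (ha_min b hbT).lt_or_eq with hab | hab
  · obtain ⟨C, hCT, D, hDT, hC, hD, hbD, hcard⟩ :=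
      hT.exists_isCup_isCap (hgen.mono hTFB) haT hbT hab ha_min hb_max
    have hCk := hcup C (hCT.trans hTFB) hC
    have hDB := h.card_le_of_isCap (hgen.mono subset_union_left).1 hD (hDT.trans hTFB)
      ⟨b, mem_inter.2 ⟨hbD, hbB⟩⟩
    have hDl := hcap _ inter_subset_right (hD.mono inter_subset_left)
    omega
  · have hx : ∀ p ∈ T, p.1 = b.1 := fun p hp => le_antisymm (hb_max p hp) (hab ▸ ha_min p hp)
    have hTB : T ⊆ B := fun p hp => hgen.1 (hTFB hp) (hTFB hbT) (hx p hp) ▸ hbB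
    have hTcap : IsCap T := fun p hp q hq _ _ hpq _ => absurd hpq (by rw [hx p hp, hx q hq]; simp)
    exact (hcap T hTB hTcap).trans (Nat.le_add_left _ _)

/-- `F` is the union of the first `k` blocks `B₀, …, Bₖ₋₁`. -/
theorem exists_convexIndep_card_le (m : ℕ) :
    ∀ k ≤ m + 1, ∃ F : Finset (ℝ × ℝ), IsGeneric F ∧ CupBounded k F ∧
      (∀ T ⊆ F, ConvexIndep (T : Set (ℝ × ℝ)) → T.card ≤ m + 1) ∧
      F.card = ∑ i ∈ range k, m.choose i := by
  intro k hk
  induction k with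
  | zero =>
    refine ⟨∅, ⟨by simp, by simp⟩, fun C hC _ => by simp [subset_empty.1 hC], fun T hT _ => ?_,
      by simp⟩
    simp [subset_empty.1 hT]
  | succ k ih =>
    obtain ⟨F, hFgen, hFcup, hFconv, hFcard⟩ := ih (by omega)
    obtain ⟨E, hE, hEcard⟩ := exists_cupCapBounded_card_eq_choose k (m - k)
    obtain ⟨B, hFB, hB, hBcard⟩ := exists_belowLeft_cupCapBounded F hE
    have hgen := hFB.isGeneric_union hFgen hB.isGeneric
    have hcup := hFB.cupBounded_union hB.isGeneric.1 hFcup hB.cupBounded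
    refine ⟨F ∪ B, hgen, hcup, fun T hT hconv => ?_, ?_⟩
    · have := hFB.card_le_of_convexIndep hgen hcup hB.capBounded
        (fun T hT hconv => (hFconv T hT hconv).trans_eq (by omega)) hT hconv
      omega
    · rw [card_union_of_disjoint hFB.disjoint, hFcard, hBcard, hEcard, sum_range_succ,
        Nat.add_sub_cancel' (by omega : k ≤ m)]

end ErdosSzekeres

open ErdosSzekeres

theorem erdos_szekeres_lower_bound (n : ℕ) (hn : 2 ≤ n) :
    ∃ S : Finset (ℝ × ℝ), S.card = 2 ^ (n - 2) ∧ NoThreeCollinear ↑S ∧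
      ¬ ∃ T : Finset (ℝ × ℝ), T ⊆ S ∧ T.card = n ∧ ConvexIndep ↑T := by
  obtain ⟨S, hgen, -, hconv, hcard⟩ := exists_convexIndep_card_le (n - 2) (n - 2 + 1) le_rfl
  refine ⟨S, by rw [hcard, Nat.sum_range_choose], hgen.noThreeCollinear, ?_⟩
  rintro ⟨T, hTS, hTcard, hT⟩
  have := hconv T hTS hT
  omega
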